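/- arXiv:1509.06699 — 5 statements merged into one kernel-verified Lean document; each statement's English description precedes it below -/
import Mathlib

section
/- (Determinant of the complement log matrix / Duality Principle, determinant form) Let $A$ be an $n \times n$ matrix with entries in $\{0,1\}$ such that every column of $A$ sums to $d$, where $1 \le d \le n-1$. Let $A^\vee = J - A$, where $J$ is the all-ones matrix. Then every column of $A^\vee$ sums to $n - d$, and $\det A = \pm d$ if and only if $\det A^\vee = \pm (n-d)$. -/
/-!
If every column of `M` sums to `c`, replacing row `k` by the sum of all rows shows
`det M = c * det (M.updateRow k 1)`. Now `J - A = -(A - J)`, the columns of `A - J` sum to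
`d - n`, and once row `0` is the all-ones row, the shift by `-J` in the other rows is undone by
adding row `0` to them. So with `K = det (A.updateRow 0 1)` we get `det A = d * K` and
`det (J - A) = ±(n - d) * K`; both sides of the equivalence say `|K| = 1`.
-/

namespace Matrix

variable {n R : Type*} [Fintype n] [DecidableEq n] [CommRing R]

theorem det_eq_mul_det_updateRow_one_of_colSum_eq (M : Matrix n n R) (c : R)
    (hc : ∀ j, ∑ i, M i j = c) (k : n) : M.det = c * (M.updateRow k 1).det := by
  have hsum : ∑ i, (1 : R) • M i = c • (1 : n → R) := by
    ext j
    rw [Finset.sum_apply]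
    simp [hc j]
  rw [← det_updateRow_smul, ← hsum, det_updateRow_sum, one_smul]

theorem det_updateRow_one_of_add_const (M : Matrix n n R) (x : R) (k : n) :
    ((of fun i j => M i j + x).updateRow k 1).det = (M.updateRow k 1).det := by
  refine det_eq_of_forall_row_eq_smul_add_const (fun i => if i = k then 0 else x) k
    (if_pos rfl) fun i j => ?_
  by_cases hi : i = k
  · subst hi
    simp
  · simp [hi]

end Matrix

theorem duality_det_general (n d : ℕ) (hd1 : 1 ≤ d) (hdn : d ≤ n - 1)
    (A : Matrix (Fin n) (Fin n) ℤ)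
    (hcol : ∀ j, ∑ i, A i j = (d : ℤ)) :
    (∀ j, ∑ i, (1 - A i j) = (n : ℤ) - d) ∧
      ((A.det = (d : ℤ) ∨ A.det = -(d : ℤ)) ↔
        ((Matrix.of fun i j => 1 - A i j).det = (n : ℤ) - d ∨
          (Matrix.of fun i j => 1 - A i j).det = -((n : ℤ) - d))) := by
  refine ⟨fun j => by simp [Finset.sum_sub_distrib, hcol j], ?_⟩
  have : NeZero n := ⟨by omega⟩
  set K := (A.updateRow 0 1).det
  have hA : A.det = d * K := A.det_eq_mul_det_updateRow_one_of_colSum_eq _ hcol 0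
  have hB : |(Matrix.of fun i j => 1 - A i j).det| = |(n : ℤ) - d| * |K| := by
    have hneg : (Matrix.of fun i j => 1 - A i j) = -Matrix.of fun i j => A i j + -1 := by
      ext i j
      simp [sub_eq_add_neg]
    have hcol' (j) : ∑ i, (Matrix.of fun i j => A i j + -1) i j = d - n := by
      simp [Finset.sum_add_distrib, hcol j, sub_eq_add_neg]
    rw [hneg, Matrix.det_neg, Matrix.det_eq_mul_det_updateRow_one_of_colSum_eq _ _ hcol' 0,
      Matrix.det_updateRow_one_of_add_const, abs_mul, abs_mul, abs_pow, abs_neg, abs_one,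
      one_pow, one_mul, abs_sub_comm]
  have hd : |(d : ℤ)| ≠ 0 := by rw [abs_ne_zero]; omega
  have hnd : |(n : ℤ) - d| ≠ 0 := by rw [abs_ne_zero]; omega
  rw [← abs_eq_abs, ← abs_eq_abs, hA, hB, abs_mul, mul_eq_left₀ hd, mul_eq_left₀ hnd]

/-- Duality principle, determinant form: for a `{0,1}` matrix with column sums `d`,
`1 ≤ d ≤ n-1`, no zero row and no all-ones row, the complement `J - A` has
column sums `n - d`, and `det A = ±d` iff `det (J - A) = ±(n - d)`. -/
theorem duality_det (n d : ℕ) (hd1 : 1 ≤ d) (hdn : d ≤ n - 1)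
    (A : Matrix (Fin n) (Fin n) ℤ)
    (h01 : ∀ i j, A i j = 0 ∨ A i j = 1)
    (hcol : ∀ j, ∑ i, A i j = (d : ℤ))
    (hrow1 : ∀ i, ∃ j, A i j = 1)
    (hrow0 : ∀ i, ∃ j, A i j = 0) :
    (∀ j, ∑ i, (1 - A i j) = (n : ℤ) - d) ∧
      ((A.det = (d : ℤ) ∨ A.det = -(d : ℤ)) ↔
        ((Matrix.of fun i j => 1 - A i j).det = (n : ℤ) - d ∨
          (Matrix.of fun i j => 1 - A i j).det = -((n : ℤ) - d))) :=
  duality_det_general n d hd1 hdn A hcol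
end

section
/- (Classification of quadratic monomial Cremona sets) Let $F \subset \mathbb{K}[x_1,\ldots,x_n]$ be a cohesive set of $n$ monomials of degree $2$ satisfying the canonical restrictions, with log matrix $A_F$ and associated graph $G_F$ (loops allowed for squares). The following are equivalent: (1) $\det A_F \ne 0$; (2) $\det A_F = \pm 2$ (i.e., $F$ is a Cremona set); (3) either $G_F$ has no loops and exactly one cycle, which has odd length, or $G_F$ is a tree together with exactly one loop. -/
/-!
The log matrix `A` is the vertex–edge incidence matrix of `G_F` (a loop counting twice): its
columns are `χ_a + χ_b`, so a walk of length `ℓ` from `a` to `b` puts `χ_a - (-1)^ℓ χ_b` in its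
column lattice. If `G_F` has a loop or an odd closed walk, some `2 χ_v` lies in that lattice, and
then, by connectivity, so does every `χ_v + χ_k`. These are the columns of `1 + χ_v 𝟙ᵀ`, whose
determinant is `2`, hence `det A ∣ 2`; and `2 ∣ det A` since every column of `A` sums to `2`.
Otherwise `G_F` is loopless and bipartite, and its `±1` colouring is a left kernel vector of `A`.

If `det A ≠ 0`, then `A` is injective on `ℤⁿ`, and connectivity shows that the set of odd
coordinates of the preimage of `2 χ_v` does not depend on `v`. A loop `j` gives the preimage
`χ_j`, an odd cycle one that is odd exactly on its edges, while an even cycle gives a nonzero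
kernel vector. Hence there is at most one loop, never a loop together with a cycle, and any two
cycles have the same edges.
-/

open SimpleGraph Matrix

namespace Matrix

variable {n R : Type*} [Fintype n] [DecidableEq n] [CommRing R]

theorem dvd_det_of_forall_dvd_sum_col [Nonempty n] (M : Matrix n n R) (d : R)
    (h : ∀ j, d ∣ ∑ i, M i j) : d ∣ M.det := by
  choose w hw using h
  have hrow : ∑ k, (fun _ ↦ (1 : R)) k • M k = d • w := by
    ext j
    simp only [one_smul, Pi.smul_apply, smul_eq_mul]
    exact (Finset.sum_apply j _ _).trans (hw j)
  have := det_updateRow_sum M (Classical.arbitrary n) fun _ ↦ 1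
  rw [hrow, det_updateRow_smul, one_smul] at this
  exact ⟨_, this.symm⟩

theorem det_dvd_det_of_forall_exists_mulVec_eq (A B : Matrix n n R)
    (h : ∀ k, ∃ x, A *ᵥ x = B *ᵥ Pi.single k 1) : A.det ∣ B.det := by
  choose x hx using h
  refine ⟨(Matrix.of fun j k ↦ x k j).det, ?_⟩
  rw [← det_mul]
  refine congrArg det (ext_of_mulVec_single fun k ↦ ?_)
  rw [← hx, ← mulVec_mulVec, mulVec_single_one]
  rfl

end Matrix

namespace SimpleGraph

variable {V : Type*} {G : SimpleGraph V}

theorem Connected.isBipartite_of_forall_even_length (hG : G.Connected)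
    (h : ∀ v (w : G.Walk v v), Even w.length) : G.IsBipartite := by
  obtain ⟨v₀⟩ := hG.nonempty
  let p : ∀ a, G.Walk v₀ a := fun a ↦ (hG.preconnected v₀ a).some
  refine ⟨recolorOfEquiv G finTwoEquiv.symm <|
    Coloring.mk (fun a ↦ decide (Even (p a).length)) fun {a b} hab ↦ ?_⟩
  have := h v₀ (((p a).concat hab).append (p b).reverse)
  rw [Walk.length_append, Walk.length_concat, Walk.length_reverse, Nat.even_add,
    Nat.even_add_one] at this
  simp only [ne_eq, decide_eq_decide]
  tauto

theorem Walk.not_isAcyclic_of_odd_length {v : V} (w : G.Walk v v) (h : Odd w.length) :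
    ¬ G.IsAcyclic := fun hG ↦ by
  have h₃ := w.three_le_chromaticNumber_of_odd_loop h
  have h₂ := chromaticNumber_le_two_iff_isBipartite.mpr hG.isBipartite
  have := h₃.trans h₂
  norm_num at this

end SimpleGraph

namespace QuadraticCremona

variable {V ι : Type*}

/-- `G_F`; `fromEdgeSet` drops the diagonal, so its loops are seen only through `e`. -/
def graph (e : ι → Sym2 V) : SimpleGraph V := fromEdgeSet (Set.range e)

def logMatrix [DecidableEq V] (e : ι → Sym2 V) : Matrix V ι ℤ :=
  Matrix.of fun i j ↦ (if i ∈ e j then 1 else 0) + (if e j = Sym2.diag i then 1 else 0)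

section Incidence

variable {e : ι → Sym2 V}

theorem graph_adj {a b : V} : (graph e).Adj a b ↔ s(a, b) ∈ Set.range e ∧ a ≠ b :=
  fromEdgeSet_adj _

theorem mem_edgeSet_graph {s : Sym2 V} :
    s ∈ (graph e).edgeSet ↔ s ∈ Set.range e ∧ ¬ s.IsDiag :=
  Set.ext_iff.mp (edgeSet_fromEdgeSet _) s

variable [DecidableEq V] [Fintype ι] [DecidableEq ι]

theorem logMatrix_mulVec_single {j : ι} {a b : V} (h : e j = s(a, b)) :
    logMatrix e *ᵥ Pi.single j 1 = Pi.single a 1 + Pi.single b 1 := by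
  ext i
  by_cases ha : i = a <;> by_cases hb : i = b <;>
    simp_all [logMatrix, Pi.single_apply, Sym2.diag, eq_comm]

theorem sum_logMatrix_col [Fintype V] (j : ι) : ∑ i, logMatrix e i j = 2 := by
  obtain ⟨a, b, hab⟩ := Sym2.exists.mp ⟨e j, rfl⟩
  have := congrFun (logMatrix_mulVec_single hab)
  simp only [mulVec_single_one, col_apply] at this
  simp [this, Finset.sum_add_distrib]

theorem logMatrix_mulVec_single_of_isDiag {j : ι} (h : (e j).IsDiag) :
    logMatrix e *ᵥ Pi.single j 1 = 2 • Pi.single ((e j).diagElem h) 1 := by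
  rw [logMatrix_mulVec_single (Sym2.diag_diagElem h).symm, two_smul]

theorem single_sub_neg_one_pow_smul_single_mem_range {a b : V} (w : (graph e).Walk a b) :
    Pi.single a 1 - (-1 : ℤ) ^ w.length • Pi.single b 1 ∈
      LinearMap.range (logMatrix e).mulVecLin := by
  induction w with
  | nil => simp
  | @cons u c b h p ih =>
    obtain ⟨⟨j, hj⟩, -⟩ := graph_adj.mp h
    have hcol : Pi.single u 1 + Pi.single c 1 ∈ LinearMap.range (logMatrix e).mulVecLin :=
      ⟨Pi.single j 1, logMatrix_mulVec_single hj⟩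
    convert sub_mem hcol ih using 1
    rw [Walk.length_cons, pow_succ]
    module

theorem exists_mulVec_eq_of_isTrail (he : Function.Injective e) {a b : V}
    (w : (graph e).Walk a b) (hw : w.IsTrail) :
    ∃ x, logMatrix e *ᵥ x = Pi.single a 1 - (-1 : ℤ) ^ w.length • Pi.single b 1 ∧
      ∀ j, Odd (x j) ↔ e j ∈ w.edges := by
  induction w with
  | nil => exact ⟨0, by simp, by simp⟩
  | @cons u c b h p ih =>
    rw [Walk.isTrail_cons] at hw
    obtain ⟨x, hx, hodd⟩ := ih hw.1
    obtain ⟨⟨j₀, hj₀⟩, -⟩ := graph_adj.mp h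
    refine ⟨Pi.single j₀ 1 - x, ?_, fun j ↦ ?_⟩
    · rw [mulVec_sub, logMatrix_mulVec_single hj₀, hx, Walk.length_cons, pow_succ]
      module
    · rw [Walk.edges_cons, List.mem_cons, ← hj₀, he.eq_iff]
      rcases eq_or_ne j j₀ with rfl | hne
      · have : ¬ Odd (x j) := by rw [hodd, hj₀]; exact hw.2
        simp [Int.odd_sub, Int.not_odd_iff_even.mp this]
      · simp [hne, hodd]

section Injective

variable (hinj : Function.Injective (logMatrix e).mulVec)
include hinj

theorem injective_of_injective_mulVec_logMatrix : Function.Injective e := by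
  intro j j' h
  obtain ⟨a, b, hab⟩ := Sym2.exists.mp ⟨e j, rfl⟩
  have := hinj ((logMatrix_mulVec_single hab).trans (logMatrix_mulVec_single (h ▸ hab)).symm)
  simpa [Pi.single_apply] using congrFun this j

theorem odd_length_of_isCycle {v : V} {c : (graph e).Walk v v} (hc : c.IsCycle) :
    Odd c.length := by
  obtain ⟨x, hx, hodd⟩ := exists_mulVec_eq_of_isTrail
    (injective_of_injective_mulVec_logMatrix hinj) c hc.isTrail
  by_contra hev
  rw [(Nat.not_odd_iff_even.mp hev).neg_one_pow, one_smul, sub_self] at hx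
  obtain ⟨s, hs⟩ := List.exists_mem_of_ne_nil _ (Walk.edges_eq_nil.not.mpr hc.not_nil)
  obtain ⟨⟨j, rfl⟩, -⟩ := mem_edgeSet_graph.mp (Walk.edges_subset_edgeSet _ hs)
  simpa [hinj (hx.trans (mulVec_zero _).symm)] using (hodd j).mpr hs

theorem odd_iff_odd_of_mulVec_eq_two_smul_single {u w : V} (hr : (graph e).Reachable u w)
    {z z' : ι → ℤ} (hz : logMatrix e *ᵥ z = 2 • Pi.single u 1)
    (hz' : logMatrix e *ᵥ z' = 2 • Pi.single w 1) (j : ι) : Odd (z j) ↔ Odd (z' j) := by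
  obtain ⟨x, hx⟩ := single_sub_neg_one_pow_smul_single_mem_range hr.some
  rw [mulVecLin_apply] at hx
  have : z = 2 • x + (-1 : ℤ) ^ hr.some.length • z' :=
    hinj (by rw [mulVec_add, mulVec_smul, mulVec_smul, hx, hz, hz']; module)
  rcases neg_one_pow_eq_or ℤ hr.some.length with h | h <;>
    simp [this, h, ← Int.not_even_iff_odd, Int.even_add]

theorem exists_mulVec_eq_two_smul_single_of_isCycle {v : V} {c : (graph e).Walk v v}
    (hc : c.IsCycle) :
    ∃ z, logMatrix e *ᵥ z = 2 • Pi.single v 1 ∧ ∀ j, Odd (z j) ↔ e j ∈ c.edges := by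
  obtain ⟨z, hz, hodd⟩ := exists_mulVec_eq_of_isTrail
    (injective_of_injective_mulVec_logMatrix hinj) c hc.isTrail
  refine ⟨z, ?_, hodd⟩
  rw [hz, (odd_length_of_isCycle hinj hc).neg_one_pow]
  module

variable (hconn : (graph e).Connected)
include hconn

theorem eq_of_isDiag {j j' : ι} (hj : (e j).IsDiag) (hj' : (e j').IsDiag) : j = j' := by
  have := odd_iff_odd_of_mulVec_eq_two_smul_single hinj (hconn.preconnected _ _)
    (logMatrix_mulVec_single_of_isDiag hj) (logMatrix_mulVec_single_of_isDiag hj') j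
  by_contra hne
  simp [hne] at this

theorem isAcyclic_of_isDiag {j : ι} (hj : (e j).IsDiag) : (graph e).IsAcyclic := by
  intro v c hc
  obtain ⟨z, hz, hodd⟩ := exists_mulVec_eq_two_smul_single_of_isCycle hinj hc
  have := odd_iff_odd_of_mulVec_eq_two_smul_single hinj (hconn.preconnected _ _) hz
    (logMatrix_mulVec_single_of_isDiag hj) j
  simp only [Pi.single_eq_same, odd_one, iff_true, hodd] at this
  exact (mem_edgeSet_graph.mp (Walk.edges_subset_edgeSet _ this)).2 hj

theorem edges_toFinset_eq_of_isCycle {v w : V} {c : (graph e).Walk v v}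
    {c' : (graph e).Walk w w} (hc : c.IsCycle) (hc' : c'.IsCycle) :
    c.edges.toFinset = c'.edges.toFinset := by
  obtain ⟨z, hz, hodd⟩ := exists_mulVec_eq_two_smul_single_of_isCycle hinj hc
  obtain ⟨z', hz', hodd'⟩ := exists_mulVec_eq_two_smul_single_of_isCycle hinj hc'
  have key (j : ι) : e j ∈ c.edges ↔ e j ∈ c'.edges := by
    rw [← hodd, ← hodd']
    exact odd_iff_odd_of_mulVec_eq_two_smul_single hinj (hconn.preconnected _ _) hz hz' j
  ext s
  simp only [List.mem_toFinset]
  constructor <;> intro hs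
  · obtain ⟨⟨j, rfl⟩, -⟩ := mem_edgeSet_graph.mp (Walk.edges_subset_edgeSet _ hs)
    exact (key j).mp hs
  · obtain ⟨⟨j, rfl⟩, -⟩ := mem_edgeSet_graph.mp (Walk.edges_subset_edgeSet _ hs)
    exact (key j).mpr hs

end Injective

end Incidence

section Square

variable [DecidableEq V] [Fintype V] {e : V → Sym2 V}

theorem two_dvd_det_logMatrix [Nonempty V] : 2 ∣ (logMatrix e).det :=
  dvd_det_of_forall_dvd_sum_col _ _ fun j ↦ (sum_logMatrix_col (e := e) j).symm ▸ dvd_rfl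

theorem det_logMatrix_dvd_two (hconn : (graph e).Connected) {v : V}
    (hv : 2 • Pi.single v 1 ∈ LinearMap.range (logMatrix e).mulVecLin) :
    (logMatrix e).det ∣ 2 := by
  let B : Matrix V V ℤ :=
    1 + replicateCol Unit (Pi.single v (1 : ℤ)) * replicateRow Unit fun _ ↦ (1 : ℤ)
  have hB : B.det = 2 := by
    simp [B, det_one_add_replicateCol_mul_replicateRow]
  rw [← hB]
  refine det_dvd_det_of_forall_exists_mulVec_eq _ _ fun k ↦ ?_
  have hk : Pi.single v 1 + Pi.single k 1 ∈ LinearMap.range (logMatrix e).mulVecLin := by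
    have hw := single_sub_neg_one_pow_smul_single_mem_range (hconn.preconnected v k).some
    rcases neg_one_pow_eq_or ℤ (hconn.preconnected v k).some.length with h | h <;>
      rw [h] at hw
    · convert sub_mem hv hw using 1
      module
    · simpa using hw
  obtain ⟨x, hx⟩ := hk
  refine ⟨x, ?_⟩
  rw [← mulVecLin_apply, hx]
  ext i
  simp [B, one_apply, mul_apply, Pi.single_apply, add_comm]

theorem det_logMatrix_eq_two_or_neg_two (hconn : (graph e).Connected)
    (h : (∃ j, (e j).IsDiag) ∨ ∃ v, ∃ w : (graph e).Walk v v, Odd w.length) :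
    (logMatrix e).det = 2 ∨ (logMatrix e).det = -2 := by
  have : ∃ v, 2 • Pi.single v 1 ∈ LinearMap.range (logMatrix e).mulVecLin := by
    rcases h with ⟨j, hj⟩ | ⟨v, w, hw⟩
    · exact ⟨_, Pi.single j 1, logMatrix_mulVec_single_of_isDiag hj⟩
    · refine ⟨v, ?_⟩
      convert single_sub_neg_one_pow_smul_single_mem_range w using 1
      rw [hw.neg_one_pow]
      module
  obtain ⟨v, hv⟩ := this
  have := hconn.nonempty
  have := Nat.dvd_antisymm (Int.natAbs_dvd_natAbs.mpr (det_logMatrix_dvd_two hconn hv))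
    (Int.natAbs_dvd_natAbs.mpr two_dvd_det_logMatrix)
  omega

theorem det_logMatrix_eq_zero [Nonempty V] (hbip : (graph e).IsBipartite)
    (hloop : ∀ j, ¬ (e j).IsDiag) : (logMatrix e).det = 0 := by
  obtain ⟨c⟩ : Nonempty ((graph e).Coloring Bool) :=
    Nonempty.map (recolorOfEquiv _ finTwoEquiv) hbip
  refine exists_vecMul_eq_zero_iff.mp ⟨fun a ↦ if c a then 1 else -1, fun h ↦ ?_, ?_⟩
  · simpa [ite_eq_iff] using congrFun h (Classical.arbitrary V)
  · ext j
    obtain ⟨a, b, hab⟩ := Sym2.exists.mp ⟨e j, rfl⟩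
    have hadj : (graph e).Adj a b :=
      graph_adj.mpr ⟨⟨j, hab⟩, fun h ↦ hloop j (by simp [hab, h])⟩
    have hc := c.valid hadj
    rw [Pi.zero_apply, ← dotProduct_single_one (_ ᵥ* _), ← dotProduct_mulVec,
      logMatrix_mulVec_single hab]
    have key : ∀ p q : Bool, p ≠ q →
        (if p then (1 : ℤ) else -1) + (if q then 1 else -1) = 0 := by
      decide
    simpa [dotProduct_add] using key _ _ hc

theorem det_logMatrix_ne_zero_iff (hconn : (graph e).Connected) :
    (logMatrix e).det ≠ 0 ↔
      (∃ j, (e j).IsDiag) ∨ ∃ v, ∃ w : (graph e).Walk v v, Odd w.length := by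
  refine ⟨fun h ↦ ?_, fun h ↦ ?_⟩
  · by_contra! hno
    have := hconn.nonempty
    exact h (det_logMatrix_eq_zero
      (hconn.isBipartite_of_forall_even_length fun v w ↦ Nat.not_odd_iff_even.mp (hno.2 v w))
      hno.1)
  · rcases det_logMatrix_eq_two_or_neg_two hconn h with h | h <;> simp [h]

end Square

end QuadraticCremona

open QuadraticCremona

theorem quadratic_cremona_classification_general (n : ℕ)
    (e : Fin n → Sym2 (Fin n))
    (A : Matrix (Fin n) (Fin n) ℤ)
    (hA : ∀ i j, A i j =
      (if i ∈ e j then 1 else 0) + (if e j = Sym2.diag i then 1 else 0))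
    (hcoh : (SimpleGraph.fromEdgeSet {s | ∃ j, e j = s}).Connected) :
    (A.det ≠ 0 ↔ (A.det = 2 ∨ A.det = -2)) ∧
    (A.det ≠ 0 ↔
      (Function.Injective e ∧
        (((∀ j, ¬ (e j).IsDiag) ∧
          ∃ (v : Fin n)
            (c : (SimpleGraph.fromEdgeSet {s | ∃ j, e j = s}).Walk v v),
            c.IsCycle ∧ Odd c.length ∧
            ∀ (w : Fin n)
              (c' : (SimpleGraph.fromEdgeSet {s | ∃ j, e j = s}).Walk w w),
              c'.IsCycle → c'.edges.toFinset = c.edges.toFinset)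
        ∨ ((∃! j, (e j).IsDiag) ∧
            (SimpleGraph.fromEdgeSet {s | ∃ j, e j = s}).IsAcyclic)))) := by
  obtain rfl : A = logMatrix e := Matrix.ext hA
  have hdet := det_logMatrix_ne_zero_iff hcoh
  refine ⟨⟨fun h ↦ det_logMatrix_eq_two_or_neg_two hcoh (hdet.mp h), ?_⟩,
    fun h ↦ ?_, ?_⟩
  · rintro (h | h) <;> simp [h]
  · have hinj := mulVec_injective_of_det_ne_zero h
    refine ⟨injective_of_injective_mulVec_logMatrix hinj, ?_⟩
    by_cases hloop : ∃ j, (e j).IsDiag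
    · obtain ⟨j, hj⟩ := hloop
      exact .inr ⟨⟨j, hj, fun j' hj' ↦ eq_of_isDiag hinj hcoh hj' hj⟩,
        isAcyclic_of_isDiag hinj hcoh hj⟩
    · obtain ⟨v, w, hw⟩ := (hdet.mp h).resolve_left hloop
      obtain ⟨u, c, hc⟩ : ∃ u, ∃ c : (graph e).Walk u u, c.IsCycle := by
        simpa [IsAcyclic] using w.not_isAcyclic_of_odd_length hw
      exact .inl ⟨not_exists.mp hloop, u, c, hc, odd_length_of_isCycle hinj hc,
        fun _ c' hc' ↦ edges_toFinset_eq_of_isCycle hinj hcoh hc' hc⟩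
  · rintro ⟨-, ⟨-, v, c, -, hodd, -⟩ | ⟨⟨j, hj, -⟩, -⟩⟩
    exacts [hdet.mpr (.inr ⟨v, c, hodd⟩), hdet.mpr (.inl ⟨j, hj⟩)]

/-- Classification of quadratic monomial Cremona sets. The monomials of degree 2
are encoded as elements `e j : Sym2 (Fin n)` (unordered pairs, with diagonal
elements encoding squares/loops), `A` is the log matrix, the canonical
restrictions hold and the associated graph is connected (cohesive).
Then: `det A ≠ 0` iff `det A = ±2` (Cremona) iff either the graph is loopless
with a unique cycle that is odd, or it is a tree with exactly one loop. -/
theorem quadratic_cremona_classification (n : ℕ) (hn : 2 ≤ n)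
    (e : Fin n → Sym2 (Fin n))
    (A : Matrix (Fin n) (Fin n) ℤ)
    (hA : ∀ i j, A i j =
      (if i ∈ e j then 1 else 0) + (if e j = Sym2.diag i then 1 else 0))
    (hcan1 : ∀ i, ∃ j, i ∈ e j)
    (hcan2 : ∀ i, ∃ j, i ∉ e j)
    (hcoh : (SimpleGraph.fromEdgeSet {s | ∃ j, e j = s}).Connected) :
    (A.det ≠ 0 ↔ (A.det = 2 ∨ A.det = -2)) ∧
    (A.det ≠ 0 ↔
      (Function.Injective e ∧
        (((∀ j, ¬ (e j).IsDiag) ∧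
          ∃ (v : Fin n)
            (c : (SimpleGraph.fromEdgeSet {s | ∃ j, e j = s}).Walk v v),
            c.IsCycle ∧ Odd c.length ∧
            ∀ (w : Fin n)
              (c' : (SimpleGraph.fromEdgeSet {s | ∃ j, e j = s}).Walk w w),
              c'.IsCycle → c'.edges.toFinset = c.edges.toFinset)
        ∨ ((∃! j, (e j).IsDiag) ∧
            (SimpleGraph.fromEdgeSet {s | ∃ j, e j = s}).IsAcyclic)))) :=
  quadratic_cremona_classification_general n e A hA hcoh
end

section
/- For $d = n-1$, the only square-free monomial Cremona set in $\mathbb{K}[x_1,\ldots,x_n]$ up to permutation of variables is $\{x_2x_3\cdots x_n,\; x_1x_3\cdots x_n,\; \ldots,\; x_1x_2\cdots x_{n-1}\}$, i.e., the set whose log matrix is $J - I$ (anti-Kronecker delta). Moreover $\det(J - I) = \pm(n-1)$, so this set is indeed a Cremona set. -/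
/-!
Column sums `n - 1` with `{0,1}` entries force exactly one zero in each column; as no row is
all ones, the map sending a column to the row of its zero is onto, hence a permutation.
For the determinant, `J - I = -(I - 𝟙 𝟙ᵀ)` and the matrix determinant lemma gives
`det (I - 𝟙 𝟙ᵀ) = 1 - n`.
-/

open Finset

variable {ι R : Type*} [Fintype ι]

theorem existsUnique_eq_zero_of_sum_eq_card_sub_one [AddCommGroupWithOne R] [CharZero R]
    {v : ι → R} (h01 : ∀ i, v i = 0 ∨ v i = 1) (hsum : ∑ i, v i = Fintype.card ι - 1) :
    ∃! i, v i = 0 := by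
  classical
  have hsum_card : ∑ i, v i = #{i | ¬v i = 0} := by
    rw [← sum_filter_ne_zero, sum_congr rfl fun i hi => (h01 i).resolve_left (mem_filter.1 hi).2]
    simp
  have hcard : #{i | ¬v i = 0} + 1 = Fintype.card ι := by
    exact_mod_cast (hsum_card ▸ hsum ▸ sub_add_cancel (Fintype.card ι : R) 1 :)
  rw [Fintype.existsUnique_iff_card_one]
  have hsplit := card_filter_add_card_filter_not (s := univ) (fun i => v i = 0)
  rw [card_univ] at hsplit
  omega

variable [DecidableEq ι]

theorem Matrix.exists_perm_eq_ite_of_col_sum_eq_card_sub_one [AddCommGroupWithOne R] [CharZero R]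
    (A : Matrix ι ι R) (h01 : ∀ i j, A i j = 0 ∨ A i j = 1)
    (hcol : ∀ j, ∑ i, A i j = Fintype.card ι - 1) (hrow : ∀ i, ∃ j, A i j = 0) :
    ∃ σ : Equiv.Perm ι, ∀ i j, A i j = if i = σ j then 0 else 1 := by
  choose f hf hf_unique using fun j =>
    existsUnique_eq_zero_of_sum_eq_card_sub_one (h01 · j) (hcol j)
  have hsurj : Function.Surjective f := fun i =>
    let ⟨j, hj⟩ := hrow i
    ⟨j, (hf_unique j i hj).symm⟩
  refine ⟨Equiv.ofBijective f (Finite.surjective_iff_bijective.1 hsurj), fun i j => ?_⟩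
  rw [Equiv.ofBijective_apply]
  split_ifs with h
  · exact h ▸ hf j
  · exact (h01 i j).resolve_left fun h0 => h (hf_unique j i h0)

theorem Matrix.det_of_fun_one_sub_one [CommRing R] :
    (Matrix.of (fun _ _ => 1) - 1 : Matrix ι ι R).det =
      (-1) ^ Fintype.card ι * (1 - Fintype.card ι) := by
  have hJ : (Matrix.of (fun _ _ => 1) - 1 : Matrix ι ι R) =
      -(1 + replicateCol Unit (fun _ : ι => (1 : R)) *
        replicateRow Unit (fun _ : ι => (-1 : R))) := by
    ext i j
    by_cases h : i = j <;> simp [mul_apply, h]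
  rw [hJ, det_neg, det_one_add_replicateCol_mul_replicateRow]
  simp [dotProduct]
  ring

/-- For `d = n - 1` the only square-free monomial Cremona set is the standard
involution: a `{0,1}` log matrix with column sums `n - 1` and no all-ones row
is a permutation of `J - I`; moreover `det (J - I) = (-1)^(n-1) (n-1) = ±(n-1)`. -/
theorem degree_n_sub_one_classification (n : ℕ) (hn : 2 ≤ n)
    (A : Matrix (Fin n) (Fin n) ℤ)
    (h01 : ∀ i j, A i j = 0 ∨ A i j = 1)
    (hcol : ∀ j, ∑ i, A i j = (n : ℤ) - 1)
    (hnocommon : ∀ i, ∃ j, A i j = 0) :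
    (∃ σ : Equiv.Perm (Fin n), ∀ i j, A i j = if i = σ j then 0 else 1) ∧
      ((Matrix.of fun _ _ : Fin n => (1 : ℤ)) - 1).det =
        (-1 : ℤ) ^ (n - 1) * ((n : ℤ) - 1) := by
  have hcol' : ∀ j, ∑ i, A i j = Fintype.card (Fin n) - 1 := by simpa using hcol
  refine ⟨A.exists_perm_eq_ite_of_col_sum_eq_card_sub_one h01 hcol' hnocommon, ?_⟩
  obtain ⟨m, rfl⟩ : ∃ m, n = m + 1 := ⟨n - 1, by omega⟩
  rw [Matrix.det_of_fun_one_sub_one, Fintype.card_fin]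
  push_cast
  ring
end

section
/- (Lemma mdc) Let $F = \{f_1,\ldots,f_6\} \subset \mathbb{K}[x_1,\ldots,x_6]$ be square-free cubic monomials whose $6\times 6$ log matrix $A_F$ satisfies $\det A_F = \pm 3$. Then for every choice of $4$ monomials from $F$, there exist two of them whose greatest common divisor has degree $2$ (i.e., two of them share at least two variables). -/
/-!
Suppose the four columns indexed by `S` pairwise share at most one variable, and let `d i` be
the number of them containing the variable `i`. Double counting gives `∑ d i = 4 · 3 = 12` and
`∑ d i ^ 2 = ∑_{j,k ∈ S} #(f j ∩ f k) ≤ 4 · 3 + 12 · 1 = 24 = 12 ^ 2 / 6`, so equality holds in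
Cauchy–Schwarz and every `d i = 2`. Hence the four columns sum to the all-`2` vector, they are
linearly dependent modulo `2`, and `det A` is even, contradicting `det A = ±3`.
-/

open Finset

section Incidence

variable {ι α : Type*} [DecidableEq α] (f : ι → Finset α) (S : Finset ι)

lemma sum_card_filter_mem [Fintype α] : ∑ i, #{j ∈ S | i ∈ f j} = ∑ j ∈ S, #(f j) := by
  simp only [card_filter, card_eq_sum_ones (f _)]
  rw [sum_comm]
  simp

lemma sum_card_filter_mem_sq [Fintype α] :
    ∑ i, #{j ∈ S | i ∈ f j} ^ 2 = ∑ j ∈ S, ∑ k ∈ S, #(f j ∩ f k) := by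
  simp only [card_filter, sq, sum_mul_sum]
  rw [sum_comm]
  refine sum_congr rfl fun j _ => ?_
  rw [sum_comm]
  refine sum_congr rfl fun k _ => ?_
  simp only [← ite_and, mul_ite, mul_one, mul_zero, sum_boole]
  simp [filter_and, inter_comm]

lemma sum_sum_card_inter_le_of_pairwise [DecidableEq ι] {r : ℕ} (hcard : ∀ j ∈ S, #(f j) = r)
    (hpair : ∀ j ∈ S, ∀ k ∈ S, j ≠ k → #(f j ∩ f k) ≤ 1) :
    ∑ j ∈ S, ∑ k ∈ S, #(f j ∩ f k) ≤ #S * (r + (#S - 1)) := by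
  refine sum_le_card_nsmul _ _ _ fun j hj => ?_
  rw [← add_sum_erase S _ hj, inter_self, hcard j hj, ← card_erase_of_mem hj]
  gcongr
  simpa using sum_le_card_nsmul _ _ 1 fun k hk =>
    hpair j hj k (mem_of_mem_erase hk) (ne_of_mem_erase hk).symm

end Incidence

lemma eq_of_sum_eq_of_sum_sq_le {ι R : Type*}
    [CommRing R] [LinearOrder R] [IsStrictOrderedRing R] {s : Finset ι} {x : ι → R} {c : R}
    (hsum : ∑ i ∈ s, x i = #s * c)
    (hsq : ∑ i ∈ s, x i ^ 2 ≤ #s * c ^ 2) : ∀ i ∈ s, x i = c := by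
  have hdev : ∑ i ∈ s, (x i - c) ^ 2 = ∑ i ∈ s, x i ^ 2 - #s * c ^ 2 := by
    simp only [sub_sq, sum_add_distrib, sum_sub_distrib, ← sum_mul, ← mul_sum, hsum, sum_const,
      nsmul_eq_mul]
    ring
  have hzero :=
    le_antisymm (hdev ▸ sub_nonpos.mpr hsq) (sum_nonneg fun i _ => sq_nonneg (x i - c))
  intro i hi
  exact sub_eq_zero.mp (pow_eq_zero_iff two_ne_zero |>.mp
    ((sum_eq_zero_iff_of_nonneg fun i _ => sq_nonneg (x i - c)).mp hzero i hi))

lemma Matrix.prime_dvd_det_of_dvd_sum_cols {n : Type*} [Fintype n] [DecidableEq n]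
    (p : ℕ) [Fact p.Prime] (A : Matrix n n ℤ) {S : Finset n} (hS : S.Nonempty)
    (h : ∀ i, (p : ℤ) ∣ ∑ j ∈ S, A i j) : (p : ℤ) ∣ A.det := by
  rw [← ZMod.intCast_zmod_eq_zero_iff_dvd]
  change Int.castRingHom (ZMod p) A.det = 0
  rw [RingHom.map_det]
  refine Matrix.exists_mulVec_eq_zero_iff.mp ⟨fun j => if j ∈ S then 1 else 0, ?_, ?_⟩
  · obtain ⟨j, hj⟩ := hS
    exact fun hv => by simpa [hj] using congrFun hv j
  · funext i
    have hi := (ZMod.intCast_zmod_eq_zero_iff_dvd _ p).mpr (h i)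
    push_cast at hi
    simpa [Matrix.mulVec, dotProduct, ← sum_filter] using hi

/-- Lemma (mdc): if six square-free cubic monomials in six variables form a
Cremona set (log matrix determinant `±3`), then among any four of them two
share at least two variables (their gcd has degree 2). -/
theorem gcd_two_of_four (f : Fin 6 → Finset (Fin 6))
    (hcard : ∀ j, (f j).card = 3)
    (A : Matrix (Fin 6) (Fin 6) ℤ)
    (hA : ∀ i j, A i j = if i ∈ f j then 1 else 0)
    (hdet : A.det = 3 ∨ A.det = -3)
    (S : Finset (Fin 6)) (hS : S.card = 4) :
    ∃ j ∈ S, ∃ k ∈ S, j ≠ k ∧ 2 ≤ (f j ∩ f k).card := by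
  by_contra! hpair
  have hsum : ∑ i, (#{j ∈ S | i ∈ f j} : ℤ) = #(univ : Finset (Fin 6)) * 2 := by
    exact_mod_cast (sum_card_filter_mem f S).trans (by simp [hcard, hS])
  have hsq : ∑ i, (#{j ∈ S | i ∈ f j} : ℤ) ^ 2 ≤ #(univ : Finset (Fin 6)) * 2 ^ 2 := by
    have := sum_sum_card_inter_le_of_pairwise f S (fun j _ => hcard j)
      fun j hj k hk hjk => Nat.le_of_lt_succ (hpair j hj k hk hjk)
    rw [hS, ← sum_card_filter_mem_sq] at this
    exact_mod_cast this.trans (by simp)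
  have hdeg := eq_of_sum_eq_of_sum_sq_le hsum hsq
  have heven : ((2 : ℕ) : ℤ) ∣ A.det := by
    refine Matrix.prime_dvd_det_of_dvd_sum_cols 2 A (card_pos.mp (by omega : 0 < #S)) fun i => ?_
    simp [hA, sum_boole, hdeg i (mem_univ i)]
  omega
end

section
/- (Plucking roots, determinant form) Let $F = \{f_1,\ldots,f_n\}$ be square-free monomials of degree $d$ in $\mathbb{K}[x_1,\ldots,x_n]$ such that $f_i = x_n g_i$ for $i = 1,\ldots,n-1$ and $x_n \nmid f_n$, and suppose both $F$ and $\tilde F = \{g_1,\ldots,g_{n-1}\} \subset \mathbb{K}[x_1,\ldots,x_{n-1}]$ satisfy the canonical restrictions. Then $F$ is a Cremona set (i.e., $\det A_F = \pm d$) if and only if $\tilde F$ is a Cremona set (i.e., $\det A_{\tilde F} = \pm(d-1)$). -/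
/-!
Summing all rows of `A` gives `d` times the all-ones row, and the all-ones row is the root row
plus the last unit vector. Replacing the root row by the sum of all rows does not change
`det A`, so multilinearity gives `det A = d * det A + d * det A'`, where `A'` is `A` with the
root row replaced by the last unit vector; expanding along that row, `det A' = det B`. Hence
`(1 - d) * det A = d * det B`, and since `d` and `d - 1` are nonzero, `det A = ±d` exactly when
`det B = ∓(d - 1)`.
-/

open Matrix

theorem Matrix.det_updateRow_last_single {R : Type*} [CommRing R] {n : ℕ}
    (A : Matrix (Fin (n + 1)) (Fin (n + 1)) R) :
    (A.updateRow (Fin.last n) (Pi.single (Fin.last n) 1)).det =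
      (A.submatrix Fin.castSucc Fin.castSucc).det := by
  rw [← adjugate_apply, adjugate_fin_succ_eq_det_submatrix, Fin.succAbove_last, Fin.val_last,
    (Even.neg_one_pow ⟨n, rfl⟩ : (-1 : R) ^ (n + n) = 1), one_mul]

theorem Matrix.one_sub_mul_det_eq_mul_det_submatrix_castSucc {R : Type*} [CommRing R] {n : ℕ}
    (A : Matrix (Fin (n + 1)) (Fin (n + 1)) R) (d : R)
    (hcol : ∀ j, ∑ i, A i j = d)
    (hroot : ∀ j, A (Fin.last n) j = if j = Fin.last n then 0 else 1) :
    (1 - d) * A.det = d * (A.submatrix Fin.castSucc Fin.castSucc).det := by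
  have hrows : ∑ k, (1 : R) • A k = d • A (Fin.last n) + d • Pi.single (Fin.last n) 1 := by
    funext j
    simp only [Finset.sum_apply, Pi.smul_apply, Pi.add_apply, smul_eq_mul, one_mul, hcol j,
      hroot j]
    by_cases hj : j = Fin.last n <;> simp [hj]
  have hdet := det_updateRow_sum A (Fin.last n) fun _ => 1
  rw [hrows, det_updateRow_add, det_updateRow_smul, det_updateRow_smul, updateRow_eq_self,
    det_updateRow_last_single, one_smul] at hdet
  linear_combination -hdet

theorem eq_or_eq_neg_iff_of_one_sub_mul_eq_mul {R : Type*} [CommRing R] [NoZeroDivisors R]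
    {a b d : R} (hd : d ≠ 0) (hd' : 1 - d ≠ 0) (h : (1 - d) * a = d * b) :
    (a = d ∨ a = -d) ↔ (b = d - 1 ∨ b = -(d - 1)) := by
  have hpos : a = d ↔ b = -(d - 1) := by
    rw [← mul_right_inj' hd', h, ← mul_right_inj' hd (b := b)]
    constructor <;> intro h' <;> linear_combination h'
  have hneg : a = -d ↔ b = d - 1 := by
    rw [← mul_right_inj' hd', h, ← mul_right_inj' hd (b := b)]
    constructor <;> intro h' <;> linear_combination h'
  rw [hpos, hneg, or_comm]

theorem plucking_roots_general (n : ℕ) (d : ℤ) (hd : 2 ≤ d)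
    (A : Matrix (Fin (n + 1)) (Fin (n + 1)) ℤ)
    (hcol : ∀ j, ∑ i, A i j = d)
    (hroot : ∀ j, A (Fin.last n) j = if j = Fin.last n then 0 else 1)
    (B : Matrix (Fin n) (Fin n) ℤ)
    (hB : ∀ i j, B i j = A (Fin.castSucc i) (Fin.castSucc j)) :
    (A.det = d ∨ A.det = -d) ↔ (B.det = d - 1 ∨ B.det = -(d - 1)) := by
  have hsub : A.submatrix Fin.castSucc Fin.castSucc = B := by
    ext i j
    exact (hB i j).symm
  have key := one_sub_mul_det_eq_mul_det_submatrix_castSucc A d hcol hroot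
  rw [hsub] at key
  exact eq_or_eq_neg_iff_of_one_sub_mul_eq_mul (by omega) (by omega) key

/-- Plucking roots, determinant form. `A` is the `{0,1}` log matrix of `n + 1`
square-free monomials of degree `d` in `n + 1` variables, the last variable
divides every monomial except the last one (a root), and `B` is the log matrix
of the quotients by the root variable. If both satisfy the canonical
restrictions then `det A = ±d` iff `det B = ±(d - 1)`. -/
theorem plucking_roots (n : ℕ) (hn : 1 ≤ n) (d : ℤ) (hd : 2 ≤ d)
    (A : Matrix (Fin (n + 1)) (Fin (n + 1)) ℤ)
    (h01 : ∀ i j, A i j = 0 ∨ A i j = 1)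
    (hcol : ∀ j, ∑ i, A i j = d)
    (hroot : ∀ j, A (Fin.last n) j = if j = Fin.last n then 0 else 1)
    (hA1 : ∀ i, ∃ j, A i j = 1) (hA0 : ∀ i, ∃ j, A i j = 0)
    (B : Matrix (Fin n) (Fin n) ℤ)
    (hB : ∀ i j, B i j = A (Fin.castSucc i) (Fin.castSucc j))
    (hB1 : ∀ i, ∃ j, B i j = 1) (hB0 : ∀ i, ∃ j, B i j = 0) :
    (A.det = d ∨ A.det = -d) ↔ (B.det = d - 1 ∨ B.det = -(d - 1)) :=
  plucking_roots_general n d hd A hcol hroot B hB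
end
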